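/- arXiv:2004.05144 — 5 statements merged into one kernel-verified Lean document; each statement's English description precedes it below -/
import Mathlib

section
/- Let p be a prime, R a commutative ring of characteristic p, and G a finite abelian p-group. Then every element x of the augmentation ideal I_G of the group algebra R[G] satisfies x^{|G|} = 0; in particular, every element of I_G is nilpotent. -/
/-! Since `|G| = p ^ n`, the map `x ↦ x ^ p ^ n` on `R[G]` is additive (Frobenius) and sends
`a • g` to `a ^ p ^ n • g ^ p ^ n = a ^ p ^ n • 1`. Hence `x ^ p ^ n = ε(x) ^ p ^ n • 1`, which
vanishes on the augmentation ideal. -/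

/-- The augmentation map of the group algebra `R[G]`: the `R`-algebra homomorphism
sending every group element to `1`. -/
noncomputable def augmentation (R : Type*) [CommRing R] (G : Type*) [CommGroup G] :
    MonoidAlgebra R G →ₐ[R] R :=
  MonoidAlgebra.lift R R G 1

namespace MonoidAlgebra

theorem algebraMap_injective {R G : Type*} [CommSemiring R] [Monoid G] :
    Function.Injective (algebraMap R (MonoidAlgebra R G)) := by
  simpa only [coe_algebraMap, Algebra.algebraMap_self, RingHom.coe_id, Function.comp_id]
    using single_right_injective (m := (1 : G))

instance expChar {R G : Type*} [CommSemiring R] [Monoid G] (p : ℕ) [ExpChar R p] :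
    ExpChar (MonoidAlgebra R G) p :=
  expChar_of_injective_algebraMap algebraMap_injective p

variable {R G : Type*} [CommRing R] [CommGroup G]

@[simp]
theorem augmentation_single (g : G) (a : R) : augmentation R G (single g a) = a := by
  simp [augmentation, lift_single]

theorem pow_expChar_pow_eq_algebraMap_augmentation {p n : ℕ} [ExpChar R p]
    (hG : ∀ g : G, g ^ p ^ n = 1) (x : MonoidAlgebra R G) :
    x ^ p ^ n = algebraMap R _ (augmentation R G x ^ p ^ n) := by
  induction x using induction_linear with
  | zero => simp [zero_pow (expChar_pow_pos R p n).ne']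
  | add x y hx hy => rw [add_pow_expChar_pow, hx, hy, map_add, add_pow_expChar_pow, map_add]
  | single g a => simp [single_pow, hG, coe_algebraMap]

theorem pow_expChar_pow_eq_zero_of_mem_ker_augmentation {p n : ℕ} [ExpChar R p]
    (hG : ∀ g : G, g ^ p ^ n = 1) {x : MonoidAlgebra R G}
    (hx : x ∈ RingHom.ker (augmentation R G)) : x ^ p ^ n = 0 := by
  rw [pow_expChar_pow_eq_algebraMap_augmentation hG, RingHom.mem_ker.mp hx,
    zero_pow (expChar_pow_pos R p n).ne', map_zero]

end MonoidAlgebra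

/-- If `R` is a commutative ring of characteristic `p` and `G` is a finite
abelian `p`-group, then every element `x` of the augmentation ideal of `R[G]` satisfies
`x ^ |G| = 0`; in particular every element of the augmentation ideal is nilpotent. -/
theorem stmt0 (p : ℕ) (hp : p.Prime) (R : Type*) [CommRing R] [CharP R p]
    (G : Type*) [CommGroup G] [Fintype G] (hG : IsPGroup p G)
    (x : MonoidAlgebra R G) (hx : x ∈ RingHom.ker (augmentation R G)) :
    x ^ Fintype.card G = 0 ∧ IsNilpotent x := by
  have : Fact p.Prime := ⟨hp⟩
  obtain ⟨n, hn⟩ := IsPGroup.iff_card.mp hG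
  rw [Nat.card_eq_fintype_card] at hn
  have hx_pow : x ^ Fintype.card G = 0 := by
    rw [hn]
    exact MonoidAlgebra.pow_expChar_pow_eq_zero_of_mem_ker_augmentation
      (fun g ↦ hn ▸ pow_card_eq_one) hx
  exact ⟨hx_pow, _, hx_pow⟩
end

section
/- Let p be a prime, let R be either a field or a discrete valuation ring of characteristic p, let G be a finite abelian group, and let M be a finitely generated projective R[G]-module of constant local rank, i.e. there is an n ∈ ℕ such that for every prime ideal 𝔮 of R[G] the localization M_𝔮 is a free R[G]_𝔮-module of rank n. Then M is a free R[G]-module of rank n. -/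
/-!
A finite algebra over a local ring has only finitely many maximal ideals, all lying over the closed
point, so `R[G]` is semilocal. Over a semilocal ring a finite flat (e.g. projective) module whose
fibres at all maximal ideals have the same dimension `n` is free of rank `n`: lift bases of the
fibres simultaneously by the Chinese remainder theorem and conclude by Nakayama's lemma
(`Module.nonempty_basis_of_flat_of_finrank_eq`).
-/

open Module TensorProduct

theorem MaximalSpectrum.finite_of_isLocalRing (R A : Type*) [CommRing R] [IsLocalRing R]
    [CommRing A] [Algebra R A] [Module.Finite R A] : Finite (MaximalSpectrum A) := by
  have := (Algebra.QuasiFinite.finite_comap_preimage_singleton (S := A)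
    (IsLocalRing.closedPoint R)).to_subtype
  have lies_over_closedPoint (J : MaximalSpectrum A) :
      PrimeSpectrum.comap (algebraMap R A) J.toPrimeSpectrum = IsLocalRing.closedPoint R :=
    PrimeSpectrum.ext (IsLocalRing.eq_maximalIdeal
      (Ideal.isMaximal_comap_of_isIntegral_of_isMaximal (R := R) J.asIdeal))
  exact Finite.of_injective (β := PrimeSpectrum.comap (algebraMap R A) ⁻¹' {IsLocalRing.closedPoint R})
    (fun J ↦ ⟨J.toPrimeSpectrum, lies_over_closedPoint J⟩)
    fun _ _ h ↦ MaximalSpectrum.toPrimeSpectrum_injective (congrArg Subtype.val h)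

theorem Ideal.finrank_quotient_tensor_eq_rankAtStalk {R M : Type*} [CommRing R] [AddCommGroup M]
    [Module R M] [Module.Finite R M] [Flat R M] (P : Ideal R) [P.IsMaximal] :
    finrank (R ⧸ P) ((R ⧸ P) ⊗[R] M) = rankAtStalk M ⟨P, inferInstance⟩ := by
  let := Ideal.Quotient.field P
  calc finrank (R ⧸ P) ((R ⧸ P) ⊗[R] M)
      = finrank P.ResidueField (P.ResidueField ⊗[R ⧸ P] ((R ⧸ P) ⊗[R] M)) :=
        finrank_baseChange.symm
    _ = finrank P.ResidueField (P.Fiber M) :=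
        (AlgebraTensorModule.cancelBaseChange R (R ⧸ P) P.ResidueField P.ResidueField M).finrank_eq
    _ = rankAtStalk M ⟨P, inferInstance⟩ := P.finrank_fiber_eq_rankAtStalk

theorem Module.nonempty_basis_of_flat_of_rankAtStalk_eq {R M : Type*} [CommRing R]
    [Finite (MaximalSpectrum R)] [AddCommGroup M] [Module R M] [Module.Finite R M] [Flat R M]
    (n : ℕ) (h : ∀ (P : Ideal R) [P.IsMaximal], rankAtStalk M ⟨P, inferInstance⟩ = n) :
    Nonempty (Basis (Fin n) R M) :=
  nonempty_basis_of_flat_of_finrank_eq R M n fun P ↦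
    P.asIdeal.finrank_quotient_tensor_eq_rankAtStalk.trans (h P.asIdeal)

theorem stmt8_general (R : Type*) [CommRing R] [IsDomain R]
    (hR : IsField R ∨ IsDiscreteValuationRing R)
    (G : Type*) [CommGroup G] [Fintype G]
    (M : Type*) [AddCommGroup M] [Module (MonoidAlgebra R G) M]
    [Module.Finite (MonoidAlgebra R G) M] [Module.Projective (MonoidAlgebra R G) M]
    (n : ℕ)
    (hrank : ∀ 𝔮 : PrimeSpectrum (MonoidAlgebra R G),
      Module.Free (Localization.AtPrime 𝔮.asIdeal)
        (LocalizedModule 𝔮.asIdeal.primeCompl M) ∧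
      Module.finrank (Localization.AtPrime 𝔮.asIdeal)
        (LocalizedModule 𝔮.asIdeal.primeCompl M) = n) :
    Nonempty (Module.Basis (Fin n) (MonoidAlgebra R G) M) := by
  have : IsLocalRing R := hR.elim (fun h ↦ letI := h.toField; inferInstance) fun _ ↦ inferInstance
  have := MaximalSpectrum.finite_of_isLocalRing R (MonoidAlgebra R G)
  exact nonempty_basis_of_flat_of_rankAtStalk_eq n fun P _ ↦ (hrank ⟨P, inferInstance⟩).2

/-- Let `R` be a field or a discrete valuation ring of characteristic `p`,
`G` a finite abelian group, and `M` a finitely generated projective `R[G]`-module of constant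
local rank `n` (i.e. for every prime `𝔮` of `R[G]` the localization `M_𝔮` is free of rank `n`
over `R[G]_𝔮`). Then `M` is a free `R[G]`-module of rank `n`. -/
theorem stmt8 (p : ℕ) (hp : p.Prime) (R : Type*) [CommRing R] [IsDomain R] [CharP R p]
    (hR : IsField R ∨ IsDiscreteValuationRing R)
    (G : Type*) [CommGroup G] [Fintype G]
    (M : Type*) [AddCommGroup M] [Module (MonoidAlgebra R G) M]
    [Module.Finite (MonoidAlgebra R G) M] [Module.Projective (MonoidAlgebra R G) M]
    (n : ℕ)
    (hrank : ∀ 𝔮 : PrimeSpectrum (MonoidAlgebra R G),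
      Module.Free (Localization.AtPrime 𝔮.asIdeal)
        (LocalizedModule 𝔮.asIdeal.primeCompl M) ∧
      Module.finrank (Localization.AtPrime 𝔮.asIdeal)
        (LocalizedModule 𝔮.asIdeal.primeCompl M) = n) :
    Nonempty (Module.Basis (Fin n) (MonoidAlgebra R G) M) :=
  stmt8_general R hR G M n hrank
end

section
/- Let p be a prime, 𝔽 a finite field of characteristic p, P a finite abelian p-group, and R := 𝔽[P] the group algebra. Let R((u)) denote the ring of formal Laurent series over R in the variable u, and let ι : R[T] → R((u)) be the R-algebra homomorphism from the polynomial ring sending T to u⁻¹. Then every unit g of R((u)) admits a unique factorization g = x · ι(y), where y is a unit of the polynomial ring R[T] and x lies in u^m · (1 + u·R⟦u⟧) for some m ∈ ℤ. -/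
/-!
The augmentation ideal of `𝔽[P]` is nil, since `(g - 1)^(p^k) = g^(p^k) - 1 = 0`, so `R = 𝔽[P]`
is a local ring whose maximal ideal `𝔪` is nilpotent (`R` is Artinian).

Existence. A unit `g` of `R((u))` has a coefficient outside `𝔪`; the first one, in degree `m`,
is a unit `c`. Then `c⁻¹u⁻ᵐg` has constant coefficient `1` and coefficients in `𝔪` in negative
degrees, so it is a power series `1 + u·R⟦u⟧` times `1 + s` with all coefficients of `s` in `𝔪`.
If those coefficients lie in `𝔪ᵏ`, then `1 + s = (1 + s₊)(1 + s₋)(1 + δ)` with `1 + s₊` a power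
series, `1 + s₋` a polynomial in `u⁻¹` with nilpotent nonconstant coefficients, hence a unit,
and `δ` with coefficients in `𝔪ᵏ⁺¹`; this stops because `𝔪` is nilpotent.

Uniqueness. An element of `uᵐ(1 + u·R⟦u⟧)` that is a unit polynomial in `u⁻¹` is, as a
polynomial, monic of degree `-m`; a monic unit is `1`.
-/

open HahnSeries Polynomial IsLocalRing

namespace HahnSeries

variable {Γ R : Type*} [AddCommMonoid Γ] [PartialOrder Γ] [IsOrderedCancelAddMonoid Γ] [CommRing R]

theorem coeff_mul_mem_mul {I J : Ideal R} {x y : HahnSeries Γ R} (hx : ∀ i, x.coeff i ∈ I)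
    (hy : ∀ i, y.coeff i ∈ J) (i : Γ) : (x * y).coeff i ∈ I * J := by
  rw [coeff_mul]
  exact Ideal.sum_mem _ fun _ _ ↦ Ideal.mul_mem_mul (hx _) (hy _)

theorem coeff_mul_mem_of_right {J : Ideal R} (x : HahnSeries Γ R) {y : HahnSeries Γ R}
    (hy : ∀ i, y.coeff i ∈ J) (i : Γ) : (x * y).coeff i ∈ J := by
  simpa using coeff_mul_mem_mul (I := ⊤) (fun _ ↦ Submodule.mem_top) hy i

end HahnSeries

namespace LaurentSeries

section CommSemiring

variable {R : Type*} [CommSemiring R]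

variable (R) in
noncomputable def aevalInvX : R[X] →ₐ[R] LaurentSeries R := aeval (single (-1) 1)

theorem coeff_aevalInvX (q : R[X]) (j : ℤ) :
    (aevalInvX R q).coeff j = if 0 < j then 0 else q.coeff j.natAbs := by
  induction q using Polynomial.induction_on' with
  | add q r hq hr =>
    rw [map_add, HahnSeries.coeff_add, hq, hr]
    split_ifs <;> simp
  | monomial n a =>
    simp only [aevalInvX, aeval_monomial, single_pow, one_pow, algebraMap_apply',
      PowerSeries.algebraMap_apply, Algebra.algebraMap_self, RingHom.id_apply, ofPowerSeries_C,
      C_apply, single_mul_single, zero_add, mul_one, smul_neg, nsmul_eq_mul, coeff_single,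
      Polynomial.coeff_monomial]
    split_ifs <;> first | rfl | omega

theorem coeff_aevalInvX_neg (q : R[X]) (n : ℕ) : (aevalInvX R q).coeff (-n) = q.coeff n := by
  simp [coeff_aevalInvX]

theorem coeff_aevalInvX_of_pos (q : R[X]) {j : ℤ} (hj : 0 < j) : (aevalInvX R q).coeff j = 0 := by
  simp [coeff_aevalInvX, hj]

theorem exists_aevalInvX_eq {s : LaurentSeries R} (hs : ∀ j, 0 < j → s.coeff j = 0) :
    ∃ q : R[X], aevalInvX R q = s := by
  classical
  refine ⟨∑ n ∈ Finset.range ((-s.order).toNat + 1), monomial n (s.coeff (-n)), ?_⟩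
  ext j
  rw [coeff_aevalInvX, finsetSum_coeff]
  simp only [Polynomial.coeff_monomial, Finset.sum_ite_eq', Finset.mem_range]
  split_ifs with hj hlt
  · exact (hs j hj).symm
  · rw [← Int.natAbs_neg, Int.natAbs_of_nonneg (by omega), neg_neg]
  · exact (coeff_eq_zero_of_lt_order (by omega)).symm

theorem exists_ofPowerSeries_eq {s : LaurentSeries R} (hs : ∀ j < 0, s.coeff j = 0) :
    ∃ f : PowerSeries R, ofPowerSeries ℤ R f = s := by
  refine ⟨PowerSeries.mk fun n ↦ s.coeff n, ?_⟩
  ext j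
  rw [PowerSeries.coeff_coe, PowerSeries.coeff_mk]
  split_ifs with hj
  · exact (hs j hj).symm
  · rw [Int.natAbs_of_nonneg (not_lt.mp hj)]

variable (R) in
/-- In the paper's variable `t = u⁻¹` these are the monic series `tⁿ(1 + t⁻¹R⟦t⁻¹⟧)`. -/
def monicSubmonoid : Submonoid (LaurentSeries R) where
  carrier := {x | ∃ (m : ℤ) (f : PowerSeries R),
    PowerSeries.constantCoeff f = 1 ∧ x = single m 1 * ofPowerSeries ℤ R f}
  mul_mem' := by
    rintro _ _ ⟨m, f, hf, rfl⟩ ⟨m', f', hf', rfl⟩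
    refine ⟨m + m', f * f', by rw [map_mul, hf, hf', mul_one], ?_⟩
    rw [map_mul, ← mul_one (1 : R), ← single_mul_single, mul_one]
    ring
  one_mem' := ⟨0, 1, map_one _, by rw [(ofPowerSeries ℤ R).map_one, mul_one, single_zero_one]⟩

variable (R) in
noncomputable def polynomialUnits : Submonoid (LaurentSeries R) :=
  (IsUnit.submonoid R[X]).map (aevalInvX R)

theorem mem_monicSubmonoid_of_coeff {x : LaurentSeries R} (hneg : ∀ j < 0, x.coeff j = 0)
    (hzero : x.coeff 0 = 1) : x ∈ monicSubmonoid R := by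
  obtain ⟨f, rfl⟩ := exists_ofPowerSeries_eq hneg
  refine ⟨0, f, ?_, by rw [single_zero_one, one_mul]⟩
  rwa [PowerSeries.coeff_coe, if_neg (lt_irrefl 0), Int.natAbs_zero,
    PowerSeries.coeff_zero_eq_constantCoeff_apply] at hzero

end CommSemiring

variable {R : Type*} [CommRing R]

theorem exists_mul_eq_one_of_mem_monicSubmonoid {x : LaurentSeries R}
    (hx : x ∈ monicSubmonoid R) : ∃ y ∈ monicSubmonoid R, x * y = 1 := by
  obtain ⟨m, f, hf, rfl⟩ := hx
  have hf' : PowerSeries.constantCoeff f = ((1 : Rˣ) : R) := hf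
  refine ⟨single (-m) 1 * ofPowerSeries ℤ R (f.invOfUnit 1),
    ⟨-m, _, by rw [PowerSeries.constantCoeff_invOfUnit, inv_one, Units.val_one], rfl⟩, ?_⟩
  calc single m 1 * ofPowerSeries ℤ R f * (single (-m) 1 * ofPowerSeries ℤ R (f.invOfUnit 1))
      = single (m + -m) (1 * 1) * ofPowerSeries ℤ R (f * f.invOfUnit 1) := by
        rw [← single_mul_single, map_mul]; ring
    _ = 1 := by rw [PowerSeries.mul_invOfUnit f 1 hf', add_neg_cancel, mul_one,
      (ofPowerSeries ℤ R).map_one, mul_one, single_zero_one]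

theorem mem_polynomialUnits_of_coeff {x : LaurentSeries R} (hpos : ∀ j, 0 < j → x.coeff j = 0)
    (hzero : IsUnit (x.coeff 0)) (hneg : ∀ j < 0, IsNilpotent (x.coeff j)) :
    x ∈ polynomialUnits R := by
  obtain ⟨q, rfl⟩ := exists_aevalInvX_eq hpos
  refine Submonoid.mem_map_of_mem _ (isUnit_iff_coeff_isUnit_isNilpotent.mpr ⟨?_, fun n hn ↦ ?_⟩)
  · simpa using coeff_aevalInvX_neg q 0 ▸ hzero
  · rw [← coeff_aevalInvX_neg]
    exact hneg _ (by omega)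

theorem isUnit_of_mem_sup {x : LaurentSeries R} (hx : x ∈ monicSubmonoid R ⊔ polynomialUnits R) :
    IsUnit x := by
  refine (sup_le (fun y hy ↦ ?_) (fun y hy ↦ ?_) : _ ≤ IsUnit.submonoid _) hx
  · obtain ⟨z, -, hyz⟩ := exists_mul_eq_one_of_mem_monicSubmonoid hy
    exact IsUnit.of_mul_eq_one _ hyz
  · obtain ⟨q, hq, rfl⟩ := Submonoid.mem_map.mp hy
    exact hq.map _

theorem eq_one_of_aevalInvX_mem_monicSubmonoid [Nontrivial R] {y : R[X]} (hy : IsUnit y)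
    (hmem : aevalInvX R y ∈ monicSubmonoid R) : y = 1 := by
  obtain ⟨m, f, hf, hyf⟩ := hmem
  have hcoeff (j : ℤ) : (aevalInvX R y).coeff j = (ofPowerSeries ℤ R f).coeff (j - m) := by
    rw [hyf, coeff_single_mul, one_mul]
  have hlead : (ofPowerSeries ℤ R f).coeff 0 = 1 := by
    rw [PowerSeries.coeff_coe, if_neg (lt_irrefl 0), Int.natAbs_zero,
      PowerSeries.coeff_zero_eq_constantCoeff_apply, hf]
  have hm : m ≤ 0 := by
    by_contra! hm
    have := hcoeff m
    rw [coeff_aevalInvX_of_pos _ hm, sub_self, hlead] at this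
    exact zero_ne_one this
  have hmonic : y.Monic := by
    refine monic_of_natDegree_le_of_coeff_eq_one m.natAbs
      (natDegree_le_iff_coeff_eq_zero.mpr fun n hn ↦ ?_) ?_
    · rw [← coeff_aevalInvX_neg, hcoeff, PowerSeries.coeff_coe, if_pos (by omega)]
    · rw [← coeff_aevalInvX_neg, hcoeff, show -(m.natAbs : ℤ) - m = 0 by omega, hlead]
  exact hmonic.isUnit_iff.mp hy

theorem eq_of_mul_aevalInvX_eq [Nontrivial R] {x x' : LaurentSeries R} {y y' : R[X]ˣ}
    (hx : x ∈ monicSubmonoid R) (hx' : x' ∈ monicSubmonoid R)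
    (h : x * aevalInvX R y = x' * aevalInvX R y') : x = x' ∧ y = y' := by
  obtain ⟨z, hz, hx'z⟩ := exists_mul_eq_one_of_mem_monicSubmonoid hx'
  have hyy : aevalInvX R y * aevalInvX R ↑y⁻¹ = 1 := by
    rw [← map_mul, Units.mul_inv, map_one]
  have hquot : aevalInvX R ↑(y' * y⁻¹) = z * x := by
    rw [Units.val_mul, map_mul]
    linear_combination (-(aevalInvX R y' * aevalInvX R ↑y⁻¹)) * hx'z
      - (z * aevalInvX R ↑y⁻¹) * h + (z * x) * hyy
  have hy : y = y' := (mul_inv_eq_one.mp <| Units.ext <|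
    eq_one_of_aevalInvX_mem_monicSubmonoid (y' * y⁻¹).isUnit (hquot ▸ mul_mem hz hx)).symm
  subst hy
  exact ⟨(y.isUnit.map (aevalInvX R)).mul_right_cancel h, rfl⟩

/-- Splitting `s = s₊ + s₋` into its parts of positive and of nonpositive degree,
`1 + s = (1 + s₊)(1 + s₋)(1 + δ)` with `δ` a multiple of `s₊ s₋`. -/
theorem exists_one_add_eq_mul_one_add {I : Ideal R} (hI : I ≤ nilradical R) {k : ℕ}
    {s : LaurentSeries R} (hs : ∀ i, s.coeff i ∈ I ^ (k + 1)) :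
    ∃ a ∈ monicSubmonoid R ⊔ polynomialUnits R, ∃ δ : LaurentSeries R,
      (∀ i, δ.coeff i ∈ I ^ (k + 2)) ∧ 1 + s = a * (1 + δ) := by
  set sneg := truncLT 1 s
  set spos := s - sneg
  have hsI (i : ℤ) : s.coeff i ∈ I := Ideal.pow_le_self k.succ_ne_zero (hs i)
  have hpos : 1 + spos ∈ monicSubmonoid R :=
    mem_monicSubmonoid_of_coeff (fun j hj ↦ by simp [spos, sneg, hj.ne, show j < 1 by omega])
      (by simp [spos, sneg])
  have hneg : 1 + sneg ∈ polynomialUnits R := by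
    refine mem_polynomialUnits_of_coeff
      (fun j hj ↦ by simp [sneg, hj.ne', show ¬j < 1 by omega]) ?_ fun j hj ↦ ?_
    · simpa [sneg] using (mem_nilradical.mp (hI (hsI 0))).isUnit_one_add
    · simpa [sneg, hj.ne, show j < 1 by omega] using mem_nilradical.mp (hI (hsI j))
  have ha := mul_mem (Submonoid.mem_sup_left hpos) (Submonoid.mem_sup_right hneg)
  obtain ⟨a', ha'⟩ := (isUnit_of_mem_sup ha).exists_right_inv
  have hprod (i : ℤ) : (spos * sneg).coeff i ∈ I ^ (k + 2) := by
    refine Ideal.pow_le_pow_right (by omega : k + 2 ≤ k + 1 + (k + 1))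
      (pow_add I (k + 1) (k + 1) ▸ coeff_mul_mem_mul (fun j ↦ ?_) (fun j ↦ ?_) i)
    · simp only [spos, sneg, HahnSeries.coeff_sub, HahnSeries.coeff_truncLT]
      split_ifs
      · simp
      · simpa using hs j
    · simp only [sneg, HahnSeries.coeff_truncLT]
      split_ifs
      · exact hs j
      · exact zero_mem _
  refine ⟨_, ha, -(a' * (spos * sneg)), fun i ↦ ?_, ?_⟩
  · rw [HahnSeries.coeff_neg]
    exact neg_mem (coeff_mul_mem_of_right a' hprod i)
  · linear_combination (spos * sneg) * ha'

theorem one_add_mem_sup_of_coeff_mem {I : Ideal R} (hI : IsNilpotent I) {s : LaurentSeries R}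
    (hs : ∀ i, s.coeff i ∈ I) : 1 + s ∈ monicSubmonoid R ⊔ polynomialUnits R := by
  obtain ⟨e, he⟩ := hI
  have hIrad : I ≤ nilradical R := fun x hx ↦ ⟨e, he ▸ Ideal.pow_mem_pow hx e⟩
  suffices ∀ n k, e ≤ n + k → ∀ s : LaurentSeries R, (∀ i, s.coeff i ∈ I ^ (k + 1)) →
      1 + s ∈ monicSubmonoid R ⊔ polynomialUnits R from
    this e 0 (by omega) s (by simpa using hs)
  intro n
  induction n with
  | zero =>
    intro k hk s hs
    have hs0 : s = 0 := by
      ext i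
      simpa [he] using Ideal.pow_le_pow_right (by omega : e ≤ k + 1) (hs i)
    rw [hs0, add_zero]
    exact one_mem _
  | succ n ih =>
    intro k hk s hs
    obtain ⟨a, ha, δ, hδ, hsδ⟩ := exists_one_add_eq_mul_one_add hIrad hs
    rw [hsδ]
    exact mul_mem ha (ih (k + 1) (by omega) δ hδ)

theorem mem_sup_of_coeff_zero_eq_one {I : Ideal R} (hI : IsNilpotent I) {w : LaurentSeries R}
    (hzero : w.coeff 0 = 1) (hneg : ∀ j < 0, w.coeff j ∈ I) :
    w ∈ monicSubmonoid R ⊔ polynomialUnits R := by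
  set wneg := truncLT 0 w
  have hpos : w - wneg ∈ monicSubmonoid R :=
    mem_monicSubmonoid_of_coeff (fun j hj ↦ by simp [wneg, hj]) (by simp [wneg, hzero])
  obtain ⟨v, -, hv⟩ := exists_mul_eq_one_of_mem_monicSubmonoid hpos
  have hw : w = (w - wneg) * (1 + v * wneg) := by linear_combination (-wneg) * hv
  rw [hw]
  refine mul_mem (Submonoid.mem_sup_left hpos) (one_add_mem_sup_of_coeff_mem hI
    (coeff_mul_mem_of_right v fun j ↦ ?_))
  simp only [wneg, HahnSeries.coeff_truncLT]
  split_ifs with hj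
  · exact hneg j hj
  · exact zero_mem _

theorem single_mem_sup (m : ℤ) {c : R} (hc : IsUnit c) :
    single m c ∈ monicSubmonoid R ⊔ polynomialUnits R := by
  have hm : single m (1 : R) ∈ monicSubmonoid R :=
    ⟨m, 1, map_one _, by rw [(ofPowerSeries ℤ R).map_one, mul_one]⟩
  have hc : single 0 c ∈ polynomialUnits R :=
    mem_polynomialUnits_of_coeff (fun j hj ↦ by simp [hj.ne']) (by simpa using hc)
      (fun j hj ↦ by simp [hj.ne])
  simpa [single_mul_single] using mul_mem (Submonoid.mem_sup_left hm) (Submonoid.mem_sup_right hc)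

variable [IsLocalRing R]

theorem exists_least_coeff_notMem_maximalIdeal {g : LaurentSeries R} (hg : IsUnit g) :
    ∃ m, g.coeff m ∉ maximalIdeal R ∧ ∀ j, g.coeff j ∉ maximalIdeal R → m ≤ j := by
  refine Int.exists_least_of_bdd ⟨g.order, fun j hj ↦ order_le_of_coeff_ne_zero ?_⟩ ?_
  · intro h
    exact hj (h ▸ zero_mem _)
  · by_contra! hall
    obtain ⟨b, hb⟩ := hg.exists_left_inv
    have := coeff_mul_mem_of_right b hall 0
    rw [hb, HahnSeries.coeff_one, if_pos rfl] at this
    exact (maximalIdeal.isMaximal R).ne_top ((Ideal.eq_top_iff_one _).mpr this)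

theorem mem_sup_of_isUnit (hR : IsNilpotent (maximalIdeal R)) {g : LaurentSeries R}
    (hg : IsUnit g) : g ∈ monicSubmonoid R ⊔ polynomialUnits R := by
  obtain ⟨m, hm, hmin⟩ := exists_least_coeff_notMem_maximalIdeal hg
  obtain ⟨c, hc⟩ := notMem_maximalIdeal.mp hm
  have hcoeff (j : ℤ) : (single (-m) (c⁻¹ : Rˣ).val * g).coeff j = c⁻¹.val * g.coeff (j + m) := by
    rw [coeff_single_mul, sub_neg_eq_add]
  have hw : single (-m) (c⁻¹ : Rˣ).val * g ∈ monicSubmonoid R ⊔ polynomialUnits R := by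
    refine mem_sup_of_coeff_zero_eq_one hR (by rw [hcoeff, zero_add, ← hc, Units.inv_mul])
      fun j hj ↦ ?_
    refine hcoeff j ▸ Ideal.mul_mem_left _ _ (not_not.mp fun h ↦ ?_)
    have := hmin _ h
    omega
  have hg : g = single m c.val * (single (-m) (c⁻¹ : Rˣ).val * g) := by
    rw [← mul_assoc, single_mul_single, add_neg_cancel, Units.mul_inv, single_zero_one, one_mul]
  rw [hg]
  exact mul_mem (single_mem_sup m c.isUnit) hw

theorem existsUnique_monic_mul_aevalInvX (hR : IsNilpotent (maximalIdeal R))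
    (g : (LaurentSeries R)ˣ) :
    ∃! xy : LaurentSeries R × R[X]ˣ,
      xy.1 ∈ monicSubmonoid R ∧ (g : LaurentSeries R) = xy.1 * aevalInvX R xy.2 := by
  obtain ⟨x, hx, _, hmap, hxy⟩ := Submonoid.mem_sup.mp (mem_sup_of_isUnit hR g.isUnit)
  obtain ⟨y, hy : IsUnit y, rfl⟩ := Submonoid.mem_map.mp hmap
  have hxy' : (g : LaurentSeries R) = x * aevalInvX R hy.unit := by rw [hy.unit_spec, hxy]
  refine ⟨(x, hy.unit), ⟨hx, hxy'⟩, ?_⟩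
  rintro ⟨x', y'⟩ ⟨hx', hg⟩
  obtain ⟨rfl, rfl⟩ := eq_of_mul_aevalInvX_eq hx' hx (hg.symm.trans hxy')
  rfl

end LaurentSeries

namespace MonoidAlgebra

variable {𝔽 P : Type*} [Field 𝔽] [CommGroup P] {p : ℕ} [Fact p.Prime] [CharP 𝔽 p]

theorem isNilpotent_of_sub_one_of_isPGroup (hP : IsPGroup p P) (g : P) :
    IsNilpotent (of 𝔽 P g - 1) := by
  have := charP_of_injective_algebraMap (algebraMap 𝔽 (MonoidAlgebra 𝔽 P)).injective p
  obtain ⟨k, hk⟩ := hP g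
  exact ⟨p ^ k, by rw [sub_pow_char_pow, ← map_pow, hk, map_one, one_pow, sub_self]⟩

theorem ker_lift_one_le_nilradical (hP : IsPGroup p P) :
    RingHom.ker (lift 𝔽 𝔽 P 1) ≤ nilradical (MonoidAlgebra 𝔽 P) := by
  suffices ∀ a, a - algebraMap 𝔽 _ (lift 𝔽 𝔽 P 1 a) ∈ nilradical (MonoidAlgebra 𝔽 P) by
    intro a ha
    simpa [(RingHom.mem_ker).mp ha] using this a
  intro a
  induction a using induction_linear with
  | zero => simp
  | add a b ha hb =>
    rw [map_add, map_add, add_sub_add_comm]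
    exact add_mem ha hb
  | single g r =>
    rw [lift_single, MonoidHom.one_apply, smul_eq_mul, mul_one, ← smul_of,
      Algebra.smul_def, ← mul_sub_one]
    exact Ideal.mul_mem_left _ _ (isNilpotent_of_sub_one_of_isPGroup hP g)

theorem isLocalRing_of_isPGroup (hP : IsPGroup p P) : IsLocalRing (MonoidAlgebra 𝔽 P) := by
  have hmax : (RingHom.ker (lift 𝔽 𝔽 P 1)).IsMaximal :=
    RingHom.ker_isMaximal_of_surjective _ fun r ↦ ⟨algebraMap 𝔽 _ r, AlgHom.commutes _ r⟩
  have : (nilradical (MonoidAlgebra 𝔽 P)).IsMaximal := by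
    rwa [le_antisymm (nilradical_le_prime _) (ker_lift_one_le_nilradical hP)]
  exact IsLocalRing.of_isMaximal_nilradical _

end MonoidAlgebra

theorem stmt9_general (p : ℕ) (hp : p.Prime)
    (𝔽 : Type*) [Field 𝔽] [CharP 𝔽 p]
    (P : Type*) [CommGroup P] [Fintype P] (hP : IsPGroup p P)
    (g : (LaurentSeries (MonoidAlgebra 𝔽 P))ˣ) :
    ∃! xy : LaurentSeries (MonoidAlgebra 𝔽 P) × (Polynomial (MonoidAlgebra 𝔽 P))ˣ,
      (∃ (m : ℤ) (f : PowerSeries (MonoidAlgebra 𝔽 P)),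
          PowerSeries.constantCoeff f = 1 ∧
          xy.1 = HahnSeries.single m 1 * HahnSeries.ofPowerSeries ℤ (MonoidAlgebra 𝔽 P) f) ∧
      (g : LaurentSeries (MonoidAlgebra 𝔽 P))
        = xy.1 * Polynomial.aeval
            (HahnSeries.single (-1 : ℤ) (1 : MonoidAlgebra 𝔽 P)) (xy.2 : Polynomial (MonoidAlgebra 𝔽 P)) := by
  have : Fact p.Prime := ⟨hp⟩
  have : IsLocalRing (MonoidAlgebra 𝔽 P) := MonoidAlgebra.isLocalRing_of_isPGroup hP
  have : IsArtinianRing (MonoidAlgebra 𝔽 P) := .of_finite 𝔽 _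
  refine LaurentSeries.existsUnique_monic_mul_aevalInvX ?_ g
  rw [← IsLocalRing.jacobson_eq_maximalIdeal ⊥ bot_ne_top]
  exact IsArtinianRing.isNilpotent_jacobson_bot

/-- Let `𝔽` be a finite field of characteristic `p`, `P` a finite abelian
`p`-group, and `R := 𝔽[P]`. Every unit `g` of the Laurent series ring `R((u))` admits a unique
factorization `g = x · ι(y)` where `y` is a unit of the polynomial ring `R[T]`,
`ι : R[T] → R((u))` is the `R`-algebra map sending `T ↦ u⁻¹`, and
`x ∈ u^m · (1 + u·R⟦u⟧)` for some `m ∈ ℤ`. -/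
theorem stmt9 (p : ℕ) (hp : p.Prime)
    (𝔽 : Type*) [Field 𝔽] [Fintype 𝔽] [CharP 𝔽 p]
    (P : Type*) [CommGroup P] [Fintype P] (hP : IsPGroup p P)
    (g : (LaurentSeries (MonoidAlgebra 𝔽 P))ˣ) :
    ∃! xy : LaurentSeries (MonoidAlgebra 𝔽 P) × (Polynomial (MonoidAlgebra 𝔽 P))ˣ,
      (∃ (m : ℤ) (f : PowerSeries (MonoidAlgebra 𝔽 P)),
          PowerSeries.constantCoeff f = 1 ∧
          xy.1 = HahnSeries.single m 1 * HahnSeries.ofPowerSeries ℤ (MonoidAlgebra 𝔽 P) f) ∧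
      (g : LaurentSeries (MonoidAlgebra 𝔽 P))
        = xy.1 * Polynomial.aeval
            (HahnSeries.single (-1 : ℤ) (1 : MonoidAlgebra 𝔽 P)) (xy.2 : Polynomial (MonoidAlgebra 𝔽 P)) :=
  stmt9_general p hp 𝔽 P hP g
end

section
/- Let R be a commutative ring, n ∈ ℕ, and A an n×n matrix over R. Regard M := Rⁿ as a module over the polynomial ring R[X], with X acting as the R-linear endomorphism determined by A. Then the sequence 0 → (R[X])ⁿ →^ρ (R[X])ⁿ →^π M → 0 is exact, where ρ is the R[X]-linear map given by the matrix X·Iₙ − A (entries X·δᵢⱼ − aᵢⱼ ∈ R[X]) and π is the R[X]-linear map sending the i-th standard basis vector of (R[X])ⁿ to the i-th standard basis vector of Rⁿ. In particular, ρ is injective, π is surjective, and the kernel of π equals the image of ρ. -/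
/-!
Modulo the image of `X·I − A`, multiplication by `X` on a constant vector `c` is `c ↦ A c`,
since `(X·I − A) c = X • c − A c`. Hence every vector of `R[X]ⁿ` is congruent to a constant one,
and `π`, which maps constant vectors bijectively onto `M` and kills the image, has exactly that
image as kernel. Injectivity holds because `det (X·I − A)` is the characteristic polynomial,
monic and therefore a non-zero-divisor.
-/

open Polynomial Matrix Module

theorem Submodule.polynomial_smul_mem {R M : Type*} [CommSemiring R] [AddCommMonoid M]
    [Module R M] [Module R[X] M] [IsScalarTower R R[X] M] (p : Submodule R M)
    (hX : ∀ m ∈ p, (X : R[X]) • m ∈ p) (f : R[X]) {m : M} (hm : m ∈ p) : f • m ∈ p := by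
  induction f using Polynomial.induction_on' with
  | add f g hf hg => rw [add_smul]; exact p.add_mem hf hg
  | monomial k a =>
    have hXk : (X ^ k : R[X]) • m ∈ p := by
      induction k with
      | zero => simpa using hm
      | succ k ih => rw [pow_succ', mul_smul]; exact hX _ ih
    rw [← C_mul_X_pow_eq_monomial, ← smul_eq_C_mul, smul_assoc]
    exact p.smul_mem a hXk

namespace Matrix

variable {R : Type*} [CommRing R] {n : Type*}

variable (R n) in
noncomputable def constVec : (n → R) →ₗ[R] n → R[X] :=
  LinearMap.compLeft (Algebra.linearMap R R[X]) n

@[simp]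
theorem constVec_apply (w : n → R) (i : n) : constVec R n w i = C (w i) := rfl

theorem constVec_single [DecidableEq n] (i : n) :
    constVec R n (Pi.single i 1) = Pi.single i 1 := by
  ext j
  simp [Pi.single_apply, apply_ite C]

variable [Fintype n] [DecidableEq n] (A : Matrix n n R)

theorem charmatrix_mulVec_constVec (w : n → R) :
    charmatrix A *ᵥ constVec R n w = (X : R[X]) • constVec R n w - constVec R n (A *ᵥ w) := by
  ext i : 1
  simp only [charmatrix, sub_mulVec, Pi.sub_apply, RingHom.mapMatrix_apply, RingHom.map_mulVec,
    scalar_apply, mulVec_diagonal, constVec_apply, Pi.smul_apply, smul_eq_mul]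
  rfl

theorem charmatrix_mulVec_injective : Function.Injective (charmatrix A).mulVec :=
  mulVec_injective_of_det_mem_nonZeroDivisors A.charpoly_monic.mem_nonZeroDivisors

theorem exists_eq_charmatrix_mulVec_add_constVec (v : n → R[X]) :
    ∃ q w, v = charmatrix A *ᵥ q + constVec R n w := by
  let S : Submodule R (n → R[X]) :=
    (LinearMap.range (toLin' (charmatrix A))).restrictScalars R ⊔ LinearMap.range (constVec R n)
  suffices v ∈ S by
    obtain ⟨_, ⟨q, rfl⟩, _, ⟨w, rfl⟩, hv⟩ := Submodule.mem_sup.mp this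
    exact ⟨q, w, hv.symm⟩
  have hX : ∀ u ∈ S, (X : R[X]) • u ∈ S := by
    intro u hu
    obtain ⟨_, ⟨q, rfl⟩, _, ⟨w, rfl⟩, rfl⟩ := Submodule.mem_sup.mp hu
    have hXu : (X : R[X]) • (toLin' (charmatrix A) q + constVec R n w) =
        charmatrix A *ᵥ ((X : R[X]) • q + constVec R n w) + constVec R n (A *ᵥ w) := by
      rw [toLin'_apply, smul_add, mulVec_add, charmatrix_mulVec_constVec, mulVec_smul]
      abel
    rw [hXu]
    exact Submodule.add_mem_sup ⟨_, rfl⟩ ⟨_, rfl⟩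
  rw [← (Pi.basisFun R[X] n).sum_repr v]
  refine Submodule.sum_mem _ fun i _ => S.polynomial_smul_mem hX _ ?_
  rw [Pi.basisFun_apply, ← constVec_single]
  exact Submodule.mem_sup_right ⟨_, rfl⟩

variable {A} {π : (n → R[X]) →ₗ[R[X]] AEval' (toLin' A)}

theorem map_constVec_of_map_single
    (hπ : ∀ i, π (Pi.single i 1) = AEval'.of (toLin' A) (Pi.single i 1)) (w : n → R) :
    π (constVec R n w) = AEval'.of (toLin' A) w :=
  LinearMap.congr_fun (f := π.restrictScalars R ∘ₗ constVec R n) (g := (AEval'.of _).toLinearMap)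
    ((Pi.basisFun R n).ext fun i => by simp [constVec_single, hπ]) w

theorem map_charmatrix_mulVec (hπ : ∀ w, π (constVec R n w) = AEval'.of (toLin' A) w)
    (q : n → R[X]) : π (charmatrix A *ᵥ q) = 0 := by
  suffices π ∘ₗ toLin' (charmatrix A) = 0 by simpa using LinearMap.congr_fun this q
  refine (Pi.basisFun R[X] n).ext fun i => ?_
  rw [Pi.basisFun_apply, ← constVec_single, LinearMap.comp_apply, toLin'_apply,
    charmatrix_mulVec_constVec, map_sub, map_smul, hπ, hπ, AEval'.X_smul_of, toLin'_apply,
    sub_self, LinearMap.zero_apply]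

theorem exact_charmatrix_of_map_constVec (hπ : ∀ w, π (constVec R n w) = AEval'.of (toLin' A) w) :
    Function.Exact (toLin' (charmatrix A)) π := by
  intro v
  refine ⟨fun hv => ?_, fun ⟨q, hq⟩ => hq ▸ map_charmatrix_mulVec hπ q⟩
  obtain ⟨q, w, rfl⟩ := exists_eq_charmatrix_mulVec_add_constVec A v
  rw [map_add, map_charmatrix_mulVec hπ, zero_add, hπ, LinearEquiv.map_eq_zero_iff] at hv
  exact ⟨q, by simp [hv]⟩

end Matrix

/-- For a commutative ring `R` and an `n × n` matrix `A` over `R`, regard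
`M := Rⁿ` as an `R[X]`-module with `X` acting through `A` (`Module.AEval'`). Then
`0 → R[X]ⁿ →^ρ R[X]ⁿ →^π M → 0` is exact, where `ρ` is given by the characteristic matrix
`X·Iₙ − A` and `π` sends the `i`-th standard basis vector of `R[X]ⁿ` to the `i`-th standard
basis vector of `Rⁿ`. -/
theorem stmt11 (R : Type*) [CommRing R] (n : ℕ) (A : Matrix (Fin n) (Fin n) R)
    (ρ : (Fin n → Polynomial R) →ₗ[Polynomial R] (Fin n → Polynomial R))
    (π : (Fin n → Polynomial R) →ₗ[Polynomial R] Module.AEval' (Matrix.toLin' A))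
    (hρ : ρ = Matrix.toLin' (Matrix.charmatrix A))
    (hπ : ∀ i : Fin n,
      π (Pi.single i 1) = Module.AEval'.of (Matrix.toLin' A) (Pi.single i 1)) :
    Function.Injective ρ ∧ Function.Surjective π ∧ Function.Exact ρ π := by
  subst hρ
  have hπC := map_constVec_of_map_single hπ
  refine ⟨charmatrix_mulVec_injective A, fun y => ?_, exact_charmatrix_of_map_constVec hπC⟩
  exact ⟨constVec R (Fin n) ((AEval'.of _).symm y), by simp [hπC]⟩
end

section
/- Let p be a prime, q a power of p, and 𝔽_q the finite field with q elements. Let F be a finite separable field extension of the rational function field 𝔽_q(t) of degree n = [F : 𝔽_q(t)], and let K/F be a finite abelian Galois extension with Galois group G. Then K_∞ := K ⊗_{𝔽_q(t)} 𝔽_q((t⁻¹)) is a free module of rank n over the group algebra 𝔽_q((t⁻¹))[G]; equivalently, there is an 𝔽_q((t⁻¹))-linear isomorphism K_∞ ≅ (𝔽_q((t⁻¹))[G])ⁿ intertwining the actions of G, where G acts on K_∞ through the first tensor factor and on (𝔽_q((t⁻¹))[G])ⁿ by multiplication by group elements. -/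
/-!
By the normal basis theorem, `K ≅ F[G]` as `F[G]`-modules; combined with an `𝔽_q(t)`-basis of
`F` of size `n` this gives a `G`-equivariant `𝔽_q(t)`-basis of `K` indexed by `Fin n × G`, on
which `g` acts by `(i, h) ↦ (i, g * h)`. Its base change to `𝔽_q((t⁻¹))` is a basis of `K_∞`
with the same property, and any module with such a basis is `(𝔽_q((t⁻¹))[G])ⁿ`.
-/

open Module

theorem IsGalois.algEquiv_apply_normalBasis {K L : Type*} [Field K] [Field L] [Algebra K L]
    [FiniteDimensional K L] [IsGalois K L] (g σ : Gal(L/K)) :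
    g (normalBasis K L σ) = normalBasis K L (g * σ) := by
  rw [normalBasis_apply σ, normalBasis_apply (g * σ), AlgEquiv.mul_apply]

theorem exists_linearEquiv_pi_monoidAlgebra_of_basis {R M ι G : Type*} [CommRing R]
    [AddCommGroup M] [Module R M] [Monoid G] [Fintype ι] (b : Basis (ι × G) R M)
    (ρ : G → M →ₗ[R] M) (hρ : ∀ g i h, ρ g (b (i, h)) = b (i, g * h)) :
    ∃ e : M ≃ₗ[R] (ι → MonoidAlgebra R G),
      ∀ g x, e (ρ g x) = MonoidAlgebra.of R G g • e x := by
  classical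
  let b' := (Pi.basis fun _ : ι => MonoidAlgebra.basis G R).reindex (Equiv.sigmaEquivProd ι G)
  have hb' : ∀ i h, b' (i, h) = Pi.single i (MonoidAlgebra.single h 1) := fun i h => by
    rw [Basis.reindex_apply, Equiv.sigmaEquivProd_symm_apply, Pi.basis_apply,
      MonoidAlgebra.basis_apply]
  let e := b.equiv b' (Equiv.refl _)
  refine ⟨e, fun g => LinearMap.congr_fun (f := e.toLinearMap ∘ₗ ρ g)
    (g := DistribSMul.toLinearMap R _ (MonoidAlgebra.of R G g) ∘ₗ e.toLinearMap)
    (b.ext fun ⟨i, h⟩ => ?_)⟩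
  change e (ρ g (b (i, h))) = MonoidAlgebra.of R G g • e (b (i, h))
  rw [hρ, Basis.equiv_apply, Basis.equiv_apply, Equiv.refl_apply, Equiv.refl_apply, hb', hb',
    ← Pi.single_smul, smul_eq_mul, MonoidAlgebra.of_apply, MonoidAlgebra.single_mul_single,
    one_mul]

theorem stmt12_general (Fq : Type) [Field Fq]
    (F : Type) [Field F] [Algebra (RatFunc Fq) F] [FiniteDimensional (RatFunc Fq) F]
    (K : Type) [Field K] [Algebra F K] [Algebra (RatFunc Fq) K]
    [IsScalarTower (RatFunc Fq) F K] [FiniteDimensional F K] [IsGalois F K]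
    (ψ : RatFunc Fq →+* LaurentSeries Fq) :
    letI : Algebra (RatFunc Fq) (LaurentSeries Fq) := ψ.toAlgebra
    ∃ e : TensorProduct (RatFunc Fq) (LaurentSeries Fq) K ≃ₗ[LaurentSeries Fq]
        (Fin (Module.finrank (RatFunc Fq) F) → MonoidAlgebra (LaurentSeries Fq) (K ≃ₐ[F] K)),
      ∀ (g : K ≃ₐ[F] K) (x : TensorProduct (RatFunc Fq) (LaurentSeries Fq) K),
        e (LinearMap.lTensor (LaurentSeries Fq)
            (LinearMap.restrictScalars (RatFunc Fq) (g : K ≃ₐ[F] K).toLinearMap) x)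
          = MonoidAlgebra.of (LaurentSeries Fq) (K ≃ₐ[F] K) g • e x := by
  let _ : Algebra (RatFunc Fq) (LaurentSeries Fq) := ψ.toAlgebra
  let b := (Module.finBasis (RatFunc Fq) F).smulTower (IsGalois.normalBasis F K)
  have hb : ∀ (g : Gal(K/F)) i h, g (b (i, h)) = b (i, g * h) := fun g i h => by
    rw [Basis.smulTower_apply, Basis.smulTower_apply, map_smul,
      IsGalois.algEquiv_apply_normalBasis]
  -- `baseChange` is definitionally the `lTensor` of the statement, but `LaurentSeries Fq`-linear.
  refine exists_linearEquiv_pi_monoidAlgebra_of_basis (b.baseChange (LaurentSeries Fq))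
    (fun g => (LinearMap.restrictScalars _ g.toLinearMap).baseChange _) fun g i h => ?_
  rw [Basis.baseChange_apply, Basis.baseChange_apply, LinearMap.baseChange_tmul,
    LinearMap.restrictScalars_apply, AlgEquiv.toLinearMap_apply, hb]

/-- For a finite separable extension `F` of `𝔽_q(t)` of degree `n` and a
finite abelian Galois extension `K/F` with Galois group `G`, the module
`K_∞ := K ⊗_{𝔽_q(t)} 𝔽_q((t⁻¹))` is free of rank `n` over `𝔽_q((t⁻¹))[G]`: there is an
`𝔽_q((t⁻¹))`-linear isomorphism `K_∞ ≅ (𝔽_q((t⁻¹))[G])ⁿ` intertwining the `G`-actions.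
Here `𝔽_q((t⁻¹))` is realized as the Laurent series field `LaurentSeries Fq` with
`𝔽_q(t)`-algebra structure `ψ` sending `t` to the inverse of the Laurent variable. -/
theorem stmt12 (p q : ℕ) (hp : p.Prime) (hq : ∃ k : ℕ, 0 < k ∧ q = p ^ k)
    (Fq : Type) [Field Fq] [Fintype Fq] (hcard : Fintype.card Fq = q)
    (F : Type) [Field F] [Algebra (RatFunc Fq) F] [FiniteDimensional (RatFunc Fq) F]
    [Algebra.IsSeparable (RatFunc Fq) F]
    (K : Type) [Field K] [Algebra F K] [Algebra (RatFunc Fq) K]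
    [IsScalarTower (RatFunc Fq) F K] [FiniteDimensional F K] [IsGalois F K]
    (hab : ∀ σ τ : K ≃ₐ[F] K, σ * τ = τ * σ)
    (ψ : RatFunc Fq →+* LaurentSeries Fq)
    (hψX : ψ (algebraMap (Polynomial Fq) (RatFunc Fq) Polynomial.X)
      = HahnSeries.single (-1 : ℤ) 1)
    (hψC : ∀ c : Fq, ψ (RatFunc.C c) = HahnSeries.C c) :
    letI : Algebra (RatFunc Fq) (LaurentSeries Fq) := ψ.toAlgebra
    ∃ e : TensorProduct (RatFunc Fq) (LaurentSeries Fq) K ≃ₗ[LaurentSeries Fq]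
        (Fin (Module.finrank (RatFunc Fq) F) → MonoidAlgebra (LaurentSeries Fq) (K ≃ₐ[F] K)),
      ∀ (g : K ≃ₐ[F] K) (x : TensorProduct (RatFunc Fq) (LaurentSeries Fq) K),
        e (LinearMap.lTensor (LaurentSeries Fq)
            (LinearMap.restrictScalars (RatFunc Fq) (g : K ≃ₐ[F] K).toLinearMap) x)
          = MonoidAlgebra.of (LaurentSeries Fq) (K ≃ₐ[F] K) g • e x :=
  stmt12_general Fq F K ψ
end
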